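/- For every r with 1 ≤ r < ρ⁻¹ and every x ∈ Γ, one has ∑_{z∈Γ} G_r(e,z)·G_r(z,x)² ≤ 2(1−rρ)⁻²·G_r(e,x). -/

import Mathlib

/-!
Expanding `G_r(z,x)² = ∑_{b,c} r^{b+c} p_b(z,x) p_c(z,x)` and bounding the factor of larger
index by `p_n ≤ ρⁿ` (a consequence of symmetry) gives
`G_r(z,x)² ≤ 2 (1 - rρ)⁻¹ ∑_n (r·rρ)ⁿ p_n(z,x)`. Summing against `G_r(e,z)`, Chapman–Kolmogorov
turns the left side into `∑_{a,n} r^{a+n} (rρ)ⁿ p_{a+n}(e,x) ≤ (1 - rρ)⁻¹ G_r(e,x)`.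
-/

open Filter MeasureTheory Set
open scoped ENNReal NNReal Topology Classical

noncomputable section

namespace BRWPaper

/-- Word length of `x` with respect to the finite generating set `S`:
the least `n` such that `x` is a product of `n` elements of `S`. -/
def wlen {Γ : Type*} [Group Γ] (S : Finset Γ) (x : Γ) : ℕ :=
  sInf {n : ℕ | ∃ f : Fin n → Γ, (∀ i, f i ∈ S) ∧ (List.ofFn f).prod = x}

/-- Word distance `d(x,y) = |x⁻¹ y|`. -/
def wdist {Γ : Type*} [Group Γ] (S : Finset Γ) (x y : Γ) : ℕ := wlen S (x⁻¹ * y)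

/-- Gromov product `(x|y)_w` with respect to the word metric. -/
def gromov {Γ : Type*} [Group Γ] (S : Finset Γ) (w x y : Γ) : ℝ :=
  ((wdist S w x : ℝ) + (wdist S w y : ℝ) - (wdist S x y : ℝ)) / 2

/-- `S` is a finite symmetric generating set of `Γ`. -/
def SymmGen {Γ : Type*} [Group Γ] (S : Finset Γ) : Prop :=
  (∀ s ∈ S, s⁻¹ ∈ S) ∧ Subgroup.closure (S : Set Γ) = ⊤

/-- Gromov hyperbolicity of the word metric associated to `S`:
for some `δ ≥ 0`, `(x|y)_w ≥ min{(x|z)_w, (y|z)_w} − δ` for all `w,x,y,z`. -/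
def IsHyperbolic {Γ : Type*} [Group Γ] (S : Finset Γ) : Prop :=
  ∃ δ : ℝ, 0 ≤ δ ∧ ∀ w x y z : Γ,
    min (gromov S w x z) (gromov S w y z) - δ ≤ gromov S w x y

/-- `Γ` is virtually `ℤ`: it contains `ℤ` as a subgroup of finite index. -/
def VirtuallyZ (Γ : Type*) [Group Γ] : Prop :=
  ∃ H : Subgroup Γ, H.index ≠ 0 ∧ Nonempty (H ≃* Multiplicative ℤ)

/-- `Γ` is nonelementary: neither finite nor virtually `ℤ`. -/
def Nonelementary (Γ : Type*) [Group Γ] : Prop :=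
  Infinite Γ ∧ ¬ VirtuallyZ Γ

/-- Cardinality of the sphere `𝕊_n` of radius `n` about the identity. -/
def sphereCard {Γ : Type*} [Group Γ] (S : Finset Γ) (n : ℕ) : ℕ :=
  Set.ncard {x : Γ | wlen S x = n}

/-- Volume entropy `v = limsup (1/n) log |𝕊_n|`. -/
def entropy {Γ : Type*} [Group Γ] (S : Finset Γ) : ℝ :=
  limsup (fun n : ℕ => Real.log (sphereCard S n) / n) atTop

/-- Convolution powers `μ^{*n}` of a probability `μ` on `Γ`. -/
def convPow {Γ : Type*} [Group Γ] (μ : Γ → ℝ) : ℕ → Γ → ℝ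
  | 0 => fun x => if x = 1 then 1 else 0
  | (n + 1) => fun x => ∑' y : Γ, convPow μ n y * μ (y⁻¹ * x)

/-- `n`-step transition probabilities `p_n(x,y) = μ^{*n}(x⁻¹y)` of the random walk
with step distribution `μ`. -/
def heatKernel {Γ : Type*} [Group Γ] (μ : Γ → ℝ) (n : ℕ) (x y : Γ) : ℝ :=
  convPow μ n (x⁻¹ * y)

/-- Spectral radius `ρ = limsup p_n(e,e)^{1/n}`. -/
def specRad {Γ : Type*} [Group Γ] (μ : Γ → ℝ) : ℝ :=
  limsup (fun n : ℕ => (convPow μ n 1) ^ (1 / (n : ℝ))) atTop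

/-- Green function `G_r(x,y) = ∑_{n ≥ 0} rⁿ p_n(x,y)`. -/
def green {Γ : Type*} [Group Γ] (μ : Γ → ℝ) (r : ℝ) (x y : Γ) : ℝ :=
  ∑' n : ℕ, r ^ n * heatKernel μ n x y

/-- `H_n(r) = ∑_{x ∈ 𝕊_n} G_r(e,x)`. -/
def Hn {Γ : Type*} [Group Γ] (S : Finset Γ) (μ : Γ → ℝ) (r : ℝ) (n : ℕ) : ℝ :=
  ∑' x : {x : Γ // wlen S x = n}, green μ r 1 (x : Γ)

/-- `H(r) = limsup H_n(r)^{1/n}`. -/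
def Hgr {Γ : Type*} [Group Γ] (S : Finset Γ) (μ : Γ → ℝ) (r : ℝ) : ℝ :=
  limsup (fun n : ℕ => (Hn S μ r n) ^ (1 / (n : ℝ))) atTop

/-- `μ` is an admissible, symmetric, superexponential probability measure on `Γ`. -/
structure IsAdmissible {Γ : Type*} [Group Γ] (S : Finset Γ) (μ : Γ → ℝ) : Prop where
  nonneg : ∀ x, 0 ≤ μ x
  total : HasSum μ 1
  symm : ∀ x, μ x⁻¹ = μ x
  gen : Subsemigroup.closure (Function.support μ) = ⊤
  superexp : ∀ r : ℝ, 0 < r → Summable fun x => Real.exp (r * wlen S x) * μ x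


section ConvolutionPower

variable {Γ : Type*} [Group Γ] (m : Γ → ℝ≥0∞)

lemma tsum_comp_mul_left {α : Type*} [AddCommMonoid α] [TopologicalSpace α] (f : Γ → α)
    (y : Γ) : ∑' x, f (y * x) = ∑' x, f x :=
  (Equiv.mulLeft y).tsum_eq f

/-- The `ℝ≥0∞`-valued counterpart of `convPow`: working there makes every rearrangement of
the series below free of summability side conditions. -/
def econvPow : ℕ → Γ → ℝ≥0∞
  | 0 => fun x => if x = 1 then 1 else 0
  | n + 1 => fun x => ∑' y, econvPow n y * m (y⁻¹ * x)

lemma econvPow_zero (x : Γ) : econvPow m 0 x = if x = 1 then 1 else 0 := rfl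

lemma econvPow_succ (n : ℕ) (x : Γ) :
    econvPow m (n + 1) x = ∑' y, econvPow m n y * m (y⁻¹ * x) := rfl

lemma econvPow_one : econvPow m 1 = m := by
  ext x
  rw [econvPow_succ, tsum_eq_single 1 fun y hy => by rw [econvPow_zero, if_neg hy, zero_mul]]
  simp [econvPow_zero]

lemma econvPow_add (a b : ℕ) (x : Γ) :
    econvPow m (a + b) x = ∑' z, econvPow m a z * econvPow m b (z⁻¹ * x) := by
  induction b generalizing x with
  | zero =>
    rw [tsum_eq_single x fun z hz => by
      rw [econvPow_zero, if_neg (by rwa [inv_mul_eq_one]), mul_zero]]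
    simp [econvPow_zero]
  | succ b ih =>
    calc econvPow m (a + b + 1) x
        = ∑' y, ∑' z, econvPow m a z * econvPow m b (z⁻¹ * y) * m (y⁻¹ * x) := by
          simp_rw [econvPow_succ, ih, ENNReal.tsum_mul_right]
      _ = ∑' z, econvPow m a z * ∑' y, econvPow m b (z⁻¹ * y) * m (y⁻¹ * x) := by
          rw [ENNReal.tsum_comm]
          simp_rw [mul_assoc, ENNReal.tsum_mul_left]
      _ = ∑' z, econvPow m a z * econvPow m (b + 1) (z⁻¹ * x) := by
          refine tsum_congr fun z => ?_
          rw [econvPow_succ, ← tsum_comp_mul_left _ z]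
          simp [mul_assoc]

lemma tsum_econvPow (hm : ∑' x, m x = 1) (n : ℕ) : ∑' x, econvPow m n x = 1 := by
  induction n with
  | zero => simp [econvPow_zero]
  | succ n ih =>
    calc ∑' x, econvPow m (n + 1) x = ∑' y, econvPow m n y * ∑' x, m (y⁻¹ * x) := by
          simp_rw [econvPow_succ, ← ENNReal.tsum_mul_left]
          exact ENNReal.tsum_comm
      _ = 1 := by
          simp_rw [tsum_comp_mul_left m, hm, mul_one, ih]

lemma econvPow_le_one (hm : ∑' x, m x = 1) (n : ℕ) (x : Γ) : econvPow m n x ≤ 1 :=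
  (ENNReal.le_tsum x).trans (tsum_econvPow m hm n).le

lemma econvPow_ne_top (hm : ∑' x, m x = 1) (n : ℕ) (x : Γ) : econvPow m n x ≠ ⊤ :=
  ne_top_of_le_ne_top ENNReal.one_ne_top (econvPow_le_one m hm n x)

lemma econvPow_inv (hm : ∀ x, m x⁻¹ = m x) (n : ℕ) (x : Γ) :
    econvPow m n x⁻¹ = econvPow m n x := by
  induction n generalizing x with
  | zero => simp [econvPow_zero]
  | succ n ih =>
    calc econvPow m (n + 1) x⁻¹ = ∑' w, m w * econvPow m n (w⁻¹ * x) := by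
          rw [econvPow_succ, ← tsum_comp_mul_left _ x⁻¹]
          refine tsum_congr fun w => ?_
          rw [mul_comm, ← ih, ← hm]
          simp
      _ = econvPow m (n + 1) x := by
          rw [add_comm, econvPow_add, econvPow_one]

lemma econvPow_sq_le (hm : ∀ x, m x⁻¹ = m x) (n : ℕ) (x : Γ) :
    econvPow m n x ^ 2 ≤ econvPow m (n + n) 1 := by
  rw [econvPow_add, sq]
  convert ENNReal.le_tsum (f := fun z => econvPow m n z * econvPow m n (z⁻¹ * 1)) x using 2
  rw [mul_one, econvPow_inv m hm]

lemma econvPow_pow_le (a k : ℕ) : econvPow m a 1 ^ k ≤ econvPow m (a * k) 1 := by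
  induction k with
  | zero => simp [econvPow_zero]
  | succ k ih =>
    calc econvPow m a 1 ^ (k + 1) ≤ econvPow m (a * k) 1 * econvPow m a 1 := by
          rw [pow_succ]; gcongr
      _ ≤ econvPow m (a * (k + 1)) 1 := by
          rw [mul_add_one, econvPow_add]
          simpa using
            ENNReal.le_tsum (f := fun z => econvPow m (a * k) z * econvPow m a (z⁻¹ * 1)) 1

end ConvolutionPower

lemma le_limsup_rpow_inv_pow {u : ℕ → ℝ} (h0 : ∀ n, 0 ≤ u n) (h1 : ∀ n, u n ≤ 1)
    (hmul : ∀ m k, u m ^ k ≤ u (m * k)) (m : ℕ) :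
    u m ≤ limsup (fun n : ℕ => u n ^ (1 / (n : ℝ))) atTop ^ m := by
  rcases Nat.eq_zero_or_pos m with rfl | hm
  · simpa using h1 0
  set a := u m ^ (1 / (m : ℝ))
  have ha : 0 ≤ a := Real.rpow_nonneg (h0 m) _
  have ham : a ^ m = u m := by
    simp only [a, one_div]
    exact Real.rpow_inv_natCast_pow (h0 m) hm.ne'
  have hroot : a ≤ limsup (fun n : ℕ => u n ^ (1 / (n : ℝ))) atTop := by
    refine le_limsup_of_frequently_le
      (frequently_atTop.2 fun N => ⟨m * (N + 1), ?_, ?_⟩) ?_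
    · nlinarith
    · have hk : m * (N + 1) ≠ 0 := by positivity
      calc a = (a ^ (m * (N + 1))) ^ (1 / ((m * (N + 1) : ℕ) : ℝ)) := by
            rw [one_div, Real.pow_rpow_inv_natCast ha hk]
        _ = (u m ^ (N + 1)) ^ (1 / ((m * (N + 1) : ℕ) : ℝ)) := by
            rw [pow_mul, ham]
        _ ≤ u (m * (N + 1)) ^ (1 / ((m * (N + 1) : ℕ) : ℝ)) :=
            Real.rpow_le_rpow (pow_nonneg (h0 m) _) (hmul m (N + 1)) (by positivity)
    · exact isBoundedUnder_of ⟨1, fun n => Real.rpow_le_one (h0 n) (h1 n) (by positivity)⟩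
  rw [← ham]
  gcongr

lemma tsum_ofReal_eq_one {α : Type*} {μ : α → ℝ} (hnn : ∀ x, 0 ≤ μ x) (htot : HasSum μ 1) :
    ∑' x, ENNReal.ofReal (μ x) = 1 := by
  rw [← ENNReal.ofReal_tsum_of_nonneg hnn htot.summable, htot.tsum_eq, ENNReal.ofReal_one]

section RandomWalk

variable {Γ : Type*} [Group Γ] {μ : Γ → ℝ}

lemma convPow_eq_toReal (hnn : ∀ x, 0 ≤ μ x) (htot : HasSum μ 1) (n : ℕ) (x : Γ) :
    convPow μ n x = (econvPow (fun y => ENNReal.ofReal (μ y)) n x).toReal := by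
  induction n generalizing x with
  | zero => by_cases h : x = 1 <;> simp [convPow, econvPow_zero, h]
  | succ n ih =>
    rw [econvPow_succ, ENNReal.tsum_toReal_eq fun y => ENNReal.mul_ne_top
      (econvPow_ne_top _ (tsum_ofReal_eq_one hnn htot) n y) ENNReal.ofReal_ne_top]
    refine tsum_congr fun y => ?_
    rw [ENNReal.toReal_mul, ← ih, ENNReal.toReal_ofReal (hnn _)]

lemma convPow_one_le_specRad_pow (hnn : ∀ x, 0 ≤ μ x) (htot : HasSum μ 1) (n : ℕ) :
    convPow μ n (1 : Γ) ≤ specRad μ ^ n := by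
  have hm := tsum_ofReal_eq_one hnn htot
  refine le_limsup_rpow_inv_pow (u := fun n => convPow μ n 1)
    (fun n => ?_) (fun n => ?_) (fun a k => ?_) n
  · rw [convPow_eq_toReal hnn htot]
    exact ENNReal.toReal_nonneg
  · rw [convPow_eq_toReal hnn htot]
    exact ENNReal.toReal_le_of_le_ofReal zero_le_one (by simpa using econvPow_le_one _ hm n 1)
  · simp_rw [convPow_eq_toReal hnn htot, ← ENNReal.toReal_pow]
    exact ENNReal.toReal_mono (econvPow_ne_top _ hm _ _) (econvPow_pow_le _ a k)

/-- `p_n(e,x)² ≤ p_{2n}(e,e)` by symmetry and Chapman–Kolmogorov, and `p_{2n}(e,e) ≤ ρ^{2n}`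
by supermultiplicativity of the return probabilities. -/
lemma econvPow_le_specRad_pow (hnn : ∀ x, 0 ≤ μ x) (htot : HasSum μ 1)
    (hsymm : ∀ x, μ x⁻¹ = μ x) (hρ : 0 ≤ specRad μ) (n : ℕ) (x : Γ) :
    econvPow (fun y => ENNReal.ofReal (μ y)) n x ≤ ENNReal.ofReal (specRad μ) ^ n := by
  refine (ENNReal.pow_le_pow_left_iff two_ne_zero).1 ?_
  calc econvPow (fun y => ENNReal.ofReal (μ y)) n x ^ 2
      ≤ econvPow (fun y => ENNReal.ofReal (μ y)) (n + n) 1 :=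
        econvPow_sq_le _ (fun y => by rw [hsymm]) n x
    _ = ENNReal.ofReal (convPow μ (n + n) 1) := by
        rw [convPow_eq_toReal hnn htot,
          ENNReal.ofReal_toReal (econvPow_ne_top _ (tsum_ofReal_eq_one hnn htot) _ _)]
    _ ≤ ENNReal.ofReal (specRad μ ^ (n + n)) :=
        ENNReal.ofReal_le_ofReal (convPow_one_le_specRad_pow hnn htot _)
    _ = (ENNReal.ofReal (specRad μ) ^ n) ^ 2 := by
        rw [ENNReal.ofReal_pow hρ, ← pow_mul, mul_two]

end RandomWalk

lemma tsum_le_two_mul_tsum_of_symm {F : ℕ × ℕ → ℝ≥0∞} (hF : ∀ b c, F (b, c) = F (c, b)) :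
    ∑' p, F p ≤ 2 * ∑' p : ℕ × ℕ, F (p.1, p.1 + p.2) := by
  let φ : Bool × ℕ × ℕ → ℕ × ℕ := fun q =>
    bif q.1 then (q.2.1, q.2.1 + q.2.2) else (q.2.1 + q.2.2, q.2.1)
  have hφ : Function.Surjective φ := by
    rintro ⟨b, c⟩
    rcases le_total b c with h | h
    · exact ⟨(true, b, c - b), by simp [φ, Nat.add_sub_cancel' h]⟩
    · exact ⟨(false, c, b - c), by simp [φ, Nat.add_sub_cancel' h]⟩
  calc ∑' p, F p ≤ ∑' q, F (φ q) := ENNReal.tsum_le_tsum_comp_of_surjective hφ F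
    _ = 2 * ∑' p : ℕ × ℕ, F (p.1, p.1 + p.2) := by
        simp [φ, ENNReal.tsum_prod', hF _ (_ + _), two_mul]

lemma tsum_pow_mul_add_le (h : ℕ → ℝ≥0∞) (s : ℝ≥0∞) :
    ∑' p : ℕ × ℕ, s ^ p.2 * h (p.1 + p.2) ≤ (1 - s)⁻¹ * ∑' n, h n := by
  calc ∑' p : ℕ × ℕ, s ^ p.2 * h (p.1 + p.2) = ∑' d, s ^ d * ∑' a, h (a + d) := by
        rw [ENNReal.tsum_prod', ENNReal.tsum_comm]
        simp_rw [ENNReal.tsum_mul_left]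
    _ ≤ ∑' d, s ^ d * ∑' n, h n := ENNReal.tsum_le_tsum fun d =>
        mul_le_mul_right (ENNReal.tsum_comp_le_tsum_of_injective (add_left_injective d) h) _
    _ = (1 - s)⁻¹ * ∑' n, h n := by rw [ENNReal.tsum_mul_right, ENNReal.tsum_geometric]

/-- In each product `q b * q c` the factor of larger index is bounded by `ρ ^ max b c`;
the two orderings of `(b, c)` cost the factor `2`. -/
lemma sq_tsum_le_of_le_pow {q : ℕ → ℝ≥0∞} {ρ : ℝ≥0∞} (hq : ∀ n, q n ≤ ρ ^ n) (R : ℝ≥0∞) :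
    (∑' n, R ^ n * q n) ^ 2 ≤ 2 * (1 - R * ρ)⁻¹ * ∑' n, (R * (R * ρ)) ^ n * q n := by
  calc (∑' n, R ^ n * q n) ^ 2 = ∑' p : ℕ × ℕ, R ^ p.1 * q p.1 * (R ^ p.2 * q p.2) := by
        rw [sq, ENNReal.tsum_prod', ← ENNReal.tsum_mul_right]
        simp_rw [← ENNReal.tsum_mul_left]
    _ ≤ 2 * ∑' p : ℕ × ℕ, R ^ p.1 * q p.1 * (R ^ (p.1 + p.2) * q (p.1 + p.2)) :=
        tsum_le_two_mul_tsum_of_symm fun b c => mul_comm _ _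
    _ ≤ 2 * ∑' p : ℕ × ℕ, (R * (R * ρ)) ^ p.1 * q p.1 * (R * ρ) ^ p.2 := by
        refine mul_le_mul_right (ENNReal.tsum_le_tsum fun p => ?_) 2
        calc R ^ p.1 * q p.1 * (R ^ (p.1 + p.2) * q (p.1 + p.2))
            ≤ R ^ p.1 * q p.1 * (R ^ (p.1 + p.2) * ρ ^ (p.1 + p.2)) := by
              gcongr; exact hq _
          _ = (R * (R * ρ)) ^ p.1 * q p.1 * (R * ρ) ^ p.2 := by ring
    _ = 2 * (1 - R * ρ)⁻¹ * ∑' n, (R * (R * ρ)) ^ n * q n := by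
        rw [ENNReal.tsum_prod']
        simp_rw [ENNReal.tsum_mul_left, ENNReal.tsum_mul_right, ENNReal.tsum_geometric]
        ring

section GreenFunction

variable {Γ : Type*} [Group Γ] (m : Γ → ℝ≥0∞)

def egreen (R : ℝ≥0∞) (x : Γ) : ℝ≥0∞ := ∑' n, R ^ n * econvPow m n x

variable {m}

lemma egreen_le {ρ : ℝ≥0∞} {x : Γ} (hp : ∀ n, econvPow m n x ≤ ρ ^ n) (R : ℝ≥0∞) :
    egreen m R x ≤ (1 - R * ρ)⁻¹ := by
  rw [← ENNReal.tsum_geometric, egreen]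
  exact ENNReal.tsum_le_tsum fun n => by rw [mul_pow]; exact mul_le_mul_right (hp n) _

lemma tsum_egreen_mul_egreen_le (R s : ℝ≥0∞) (x : Γ) :
    ∑' z, egreen m R z * egreen m (R * s) (z⁻¹ * x) ≤ (1 - s)⁻¹ * egreen m R x := by
  calc ∑' z, egreen m R z * egreen m (R * s) (z⁻¹ * x)
      = ∑' p : ℕ × ℕ, s ^ p.2 * (R ^ (p.1 + p.2) * econvPow m (p.1 + p.2) x) := by
        simp_rw [egreen, ENNReal.tsum_prod', ← ENNReal.tsum_mul_right, ← ENNReal.tsum_mul_left]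
        rw [ENNReal.tsum_comm]
        refine tsum_congr fun a => ?_
        rw [ENNReal.tsum_comm]
        refine tsum_congr fun d => ?_
        rw [econvPow_add, ← ENNReal.tsum_mul_left, ← ENNReal.tsum_mul_left]
        exact tsum_congr fun z => by ring
    _ ≤ (1 - s)⁻¹ * egreen m R x := tsum_pow_mul_add_le _ s

lemma tsum_egreen_mul_egreen_sq_le {ρ : ℝ≥0∞} (hp : ∀ n y, econvPow m n y ≤ ρ ^ n)
    (R : ℝ≥0∞) (x : Γ) :
    ∑' z, egreen m R z * egreen m R (z⁻¹ * x) ^ 2 ≤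
      2 * ((1 - R * ρ) ^ 2)⁻¹ * egreen m R x := by
  calc ∑' z, egreen m R z * egreen m R (z⁻¹ * x) ^ 2
      ≤ ∑' z, egreen m R z * (2 * (1 - R * ρ)⁻¹ * egreen m (R * (R * ρ)) (z⁻¹ * x)) :=
        ENNReal.tsum_le_tsum fun z =>
          mul_le_mul_right (sq_tsum_le_of_le_pow (fun n => hp n _) R) _
    _ = 2 * (1 - R * ρ)⁻¹ * ∑' z, egreen m R z * egreen m (R * (R * ρ)) (z⁻¹ * x) := by
        rw [← ENNReal.tsum_mul_left]
        exact tsum_congr fun z => by ring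
    _ ≤ 2 * (1 - R * ρ)⁻¹ * ((1 - R * ρ)⁻¹ * egreen m R x) :=
        mul_le_mul_right (tsum_egreen_mul_egreen_le R _ x) _
    _ = 2 * ((1 - R * ρ) ^ 2)⁻¹ * egreen m R x := by
        rw [ENNReal.inv_pow]; ring

end GreenFunction

lemma green_eq_toReal_egreen {Γ : Type*} [Group Γ] {μ : Γ → ℝ} (hnn : ∀ x, 0 ≤ μ x)
    (htot : HasSum μ 1) {r : ℝ} (hr : 0 ≤ r) (y x : Γ) :
    green μ r y x =
      (egreen (fun z => ENNReal.ofReal (μ z)) (ENNReal.ofReal r) (y⁻¹ * x)).toReal := by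
  rw [egreen, ENNReal.tsum_toReal_eq fun n => ENNReal.mul_ne_top (by simp)
    (econvPow_ne_top _ (tsum_ofReal_eq_one hnn htot) _ _)]
  refine tsum_congr fun n => ?_
  rw [heatKernel, convPow_eq_toReal hnn htot, ENNReal.toReal_mul, ENNReal.toReal_pow,
    ENNReal.toReal_ofReal hr]

theorem statement_10_general {Γ : Type*} [Group Γ] (S : Finset Γ) (μ : Γ → ℝ)
    (hμ : IsAdmissible S μ)
    (r : ℝ) (hr1 : 1 ≤ r) (hr2 : r < (specRad μ)⁻¹) (x : Γ) :
    (∑' z : Γ, green μ r 1 z * green μ r z x ^ 2) ≤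
      2 * ((1 - r * specRad μ) ^ 2)⁻¹ * green μ r 1 x := by
  obtain ⟨hnn, htot, hsymm, -, -⟩ := hμ
  have hρ : 0 < specRad μ := inv_pos.mp (by linarith)
  have hr : 0 ≤ r := by linarith
  have ht : r * specRad μ < 1 := by
    simpa [hρ.ne'] using mul_lt_mul_of_pos_right hr2 hρ
  set G := egreen (fun z => ENNReal.ofReal (μ z)) (ENNReal.ofReal r)
  have hp := econvPow_le_specRad_pow hnn htot hsymm hρ.le
  have h1t : 1 - ENNReal.ofReal r * ENNReal.ofReal (specRad μ) =
      ENNReal.ofReal (1 - r * specRad μ) := by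
    rw [← ENNReal.ofReal_mul hr, ENNReal.ofReal_sub _ (by positivity), ENNReal.ofReal_one]
  have hpos : 1 - ENNReal.ofReal r * ENNReal.ofReal (specRad μ) ≠ 0 := by simp [h1t, ht]
  have hG : ∀ y, G y ≠ ⊤ := fun y =>
    ne_top_of_le_ne_top (ENNReal.inv_ne_top.2 hpos) (egreen_le (hp · y) _)
  simp_rw [green_eq_toReal_egreen hnn htot hr, inv_one, one_mul]
  calc ∑' z, (G z).toReal * (G (z⁻¹ * x)).toReal ^ 2
      = (∑' z, G z * G (z⁻¹ * x) ^ 2).toReal := by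
        rw [ENNReal.tsum_toReal_eq fun z =>
          ENNReal.mul_ne_top (hG z) (ENNReal.pow_ne_top (hG _))]
        simp [ENNReal.toReal_mul, ENNReal.toReal_pow]
    _ ≤ (2 * ((1 - ENNReal.ofReal r * ENNReal.ofReal (specRad μ)) ^ 2)⁻¹ * G x).toReal :=
        ENNReal.toReal_mono (ENNReal.mul_ne_top (ENNReal.mul_ne_top ENNReal.ofNat_ne_top
          (ENNReal.inv_ne_top.2 (pow_ne_zero 2 hpos))) (hG x))
          (tsum_egreen_mul_egreen_sq_le hp _ x)
    _ = 2 * ((1 - r * specRad μ) ^ 2)⁻¹ * (G x).toReal := by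
        simp [h1t, ENNReal.toReal_ofReal (sub_nonneg.2 ht.le)]

theorem statement_10 {Γ : Type*} [Group Γ] (S : Finset Γ) (μ : Γ → ℝ)
    (hS : SymmGen S) (hhyp : IsHyperbolic S) (hne : Nonelementary Γ)
    (hμ : IsAdmissible S μ) (hρ0 : 0 < specRad μ) (hρ1 : specRad μ < 1)
    (r : ℝ) (hr1 : 1 ≤ r) (hr2 : r < (specRad μ)⁻¹) (x : Γ) :
    (∑' z : Γ, green μ r 1 z * green μ r z x ^ 2) ≤
      2 * ((1 - r * specRad μ) ^ 2)⁻¹ * green μ r 1 x :=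
  statement_10_general S μ hμ r hr1 hr2 x

end BRWPaper
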